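/- arXiv:2008.13010 — 4 statements merged into one kernel-verified Lean document; each statement's English description precedes it below -/
import Mathlib

section
/- Let 𝒞 ⊆ ℝ^{n+m} and 𝒫 ⊆ ℝⁿ be proper C-sets and let A ∈ ℝ^{n×n}, B ∈ ℝ^{n×m}. Define 𝒯⁺ = (𝒞* ⊕ Mᵀ𝒫*)* and 𝒫⁺ = P_x𝒯⁺. Then 𝒯⁺ is a proper C-set in ℝ^{n+m} and 𝒫⁺ is a proper C-set in ℝⁿ. -/
/-!
The polar of a bounded set with the origin in its interior is a proper C-set: it is a closed
intersection of half-spaces, it lies in the ball of radius `2/ε` when `ball 0 ε ⊆ X`, and it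
contains the ball of radius `R⁻¹` when `X ⊆ closedBall 0 R`. The set `𝒞* ⊕ Mᵀ𝒫*` is bounded
(a sum of compact sets) and contains `𝒞*`, so `𝒯⁺` is a proper C-set. Finally `P_x` is a
surjective linear map, hence open, so it maps proper C-sets to proper C-sets.
-/

open Pointwise Filter Topology Matrix

noncomputable section

/-- ℝⁿ with the standard (Euclidean) inner product. -/
abbrev Rsp (n : ℕ) := EuclideanSpace ℝ (Fin n)

/-- ℝ^{n+m} realized as the L²-product ℝⁿ × ℝᵐ. -/
abbrev Rsp2 (n m : ℕ) := WithLp 2 (Rsp n × Rsp m)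

/-- A C-set: compact, convex, containing the origin. -/
def IsCSet {E : Type*} [NormedAddCommGroup E] [NormedSpace ℝ E] (X : Set E) : Prop :=
  IsCompact X ∧ Convex ℝ X ∧ (0 : E) ∈ X

/-- A proper C-set: a C-set containing the origin in its interior. -/
def IsProperCSet {E : Type*} [NormedAddCommGroup E] [NormedSpace ℝ E] (X : Set E) : Prop :=
  IsCSet X ∧ (0 : E) ∈ interior X

/-- The polar set 𝒳* = {y : ⟨y,x⟩ ≤ 1 for all x ∈ 𝒳}. -/
def polarSet {E : Type*} [NormedAddCommGroup E] [InnerProductSpace ℝ E] (X : Set E) : Set E :=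
  {y | ∀ x ∈ X, inner ℝ y x ≤ (1 : ℝ)}

/-- The Minkowski (gauge) function γ(𝒳,y) = inf{η ≥ 0 : y ∈ η𝒳}. -/
def mgauge {E : Type*} [NormedAddCommGroup E] [NormedSpace ℝ E] (X : Set E) (y : E) : ℝ :=
  sInf {η : ℝ | 0 ≤ η ∧ y ∈ η • X}

variable {n m : ℕ}

/-- The map M = (A B) : ℝ^{n+m} → ℝⁿ, M(x,u) = Ax + Bu. -/
def Mfwd (A : Matrix (Fin n) (Fin n) ℝ) (B : Matrix (Fin n) (Fin m) ℝ) (w : Rsp2 n m) : Rsp n :=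
  Matrix.toEuclideanLin A w.ofLp.1 + Matrix.toEuclideanLin B w.ofLp.2

/-- The transpose map Mᵀ : ℝⁿ → ℝ^{n+m}, Mᵀp = (Aᵀp, Bᵀp). -/
def Mtr (A : Matrix (Fin n) (Fin n) ℝ) (B : Matrix (Fin n) (Fin m) ℝ) (p : Rsp n) : Rsp2 n m :=
  WithLp.toLp 2 (Matrix.toEuclideanLin Aᵀ p, Matrix.toEuclideanLin Bᵀ p)

/-- The projection P_x : ℝ^{n+m} → ℝⁿ, (x,u) ↦ x. -/
def Pxproj : Rsp2 n m → Rsp n := fun w => w.ofLp.1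

section Polar

variable {E : Type*} [NormedAddCommGroup E] [InnerProductSpace ℝ E]

theorem convex_polarSet (X : Set E) : Convex ℝ (polarSet X) := by
  intro y₁ h₁ y₂ h₂ a b ha hb hab x hx
  rw [inner_add_left, real_inner_smul_left, real_inner_smul_left]
  nlinarith [h₁ x hx, h₂ x hx]

theorem isClosed_polarSet (X : Set E) : IsClosed (polarSet X) := by
  have : polarSet X = ⋂ x ∈ X, {y : E | inner ℝ y x ≤ (1 : ℝ)} := by
    ext y; simp [polarSet]
  rw [this]
  exact isClosed_biInter fun x _ => isClosed_le (by fun_prop) continuous_const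

theorem zero_mem_polarSet (X : Set E) : (0 : E) ∈ polarSet X := by
  intro x _; simp

theorem ball_inv_subset_polarSet {X : Set E} {R : ℝ} (hR : 0 < R)
    (hX : X ⊆ Metric.closedBall 0 R) : Metric.ball 0 R⁻¹ ⊆ polarSet X := by
  intro y hy x hx
  have hy' : ‖y‖ < R⁻¹ := by simpa using hy
  have hx' : ‖x‖ ≤ R := by simpa using hX hx
  calc inner ℝ y x ≤ ‖y‖ * ‖x‖ := real_inner_le_norm y x
    _ ≤ R⁻¹ * R := mul_le_mul hy'.le hx' (norm_nonneg x) (inv_pos.mpr hR).le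
    _ = 1 := inv_mul_cancel₀ hR.ne'

theorem polarSet_subset_closedBall {X : Set E} {ε : ℝ} (hε : 0 < ε)
    (hX : Metric.ball 0 ε ⊆ X) : polarSet X ⊆ Metric.closedBall 0 (2 / ε) := by
  intro y hy
  rcases eq_or_ne y 0 with rfl | hy0
  · simp only [Metric.mem_closedBall, dist_self]; positivity
  have hyn : 0 < ‖y‖ := norm_pos_iff.mpr hy0
  -- test the polar inequality against the point of norm `ε / 2` in the direction of `y`
  set c : ℝ := ε / (2 * ‖y‖) with hc
  have hc_norm : c * ‖y‖ = ε / 2 := by rw [hc]; field_simp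
  have hcy : c • y ∈ X := by
    apply hX
    rw [Metric.mem_ball, dist_zero_right, norm_smul, Real.norm_of_nonneg (by positivity)]
    linarith
  have key := hy _ hcy
  rw [real_inner_smul_right, real_inner_self_eq_norm_sq] at key
  rw [Metric.mem_closedBall, dist_zero_right, le_div_iff₀ hε]
  nlinarith

theorem isCompact_polarSet [FiniteDimensional ℝ E] {X : Set E} (hX : (0 : E) ∈ interior X) :
    IsCompact (polarSet X) := by
  obtain ⟨ε, hε, hball⟩ := Metric.mem_nhds_iff.mp (mem_interior_iff_mem_nhds.mp hX)
  exact (isCompact_closedBall 0 (2 / ε)).of_isClosed_subset (isClosed_polarSet X)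
    (polarSet_subset_closedBall hε hball)

theorem zero_mem_interior_polarSet {X : Set E} (hX : Bornology.IsBounded X) :
    (0 : E) ∈ interior (polarSet X) := by
  obtain ⟨R, hR, hsub⟩ := hX.subset_closedBall_lt 0 0
  exact mem_interior.mpr ⟨_, ball_inv_subset_polarSet hR hsub, Metric.isOpen_ball,
    Metric.mem_ball_self (inv_pos.mpr hR)⟩

theorem isProperCSet_polarSet [FiniteDimensional ℝ E] {X : Set E}
    (hb : Bornology.IsBounded X) (h0 : (0 : E) ∈ interior X) : IsProperCSet (polarSet X) :=
  ⟨⟨isCompact_polarSet h0, convex_polarSet X, zero_mem_polarSet X⟩,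
    zero_mem_interior_polarSet hb⟩

theorem isProperCSet_polarSet_add_image [FiniteDimensional ℝ E]
    {F : Type*} [NormedAddCommGroup F] [InnerProductSpace ℝ F] [FiniteDimensional ℝ F]
    (f : F →ₗ[ℝ] E) {C : Set E} {P : Set F} (hC : IsProperCSet C) (hP : IsProperCSet P) :
    IsProperCSet (polarSet (polarSet C + f '' polarSet P)) := by
  have h0 : (0 : E) ∈ f '' polarSet P := ⟨0, zero_mem_polarSet P, map_zero f⟩
  refine isProperCSet_polarSet ?_ ?_
  · exact ((isCompact_polarSet hC.2).add
      ((isCompact_polarSet hP.2).image f.continuous_of_finiteDimensional)).isBounded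
  · exact interior_mono (Set.subset_add_left _ h0) (zero_mem_interior_polarSet hC.1.1.isBounded)

end Polar

theorem IsProperCSet.image_of_surjective {E F : Type*} [NormedAddCommGroup E] [NormedSpace ℝ E]
    [CompleteSpace E] [NormedAddCommGroup F] [NormedSpace ℝ F] [CompleteSpace F]
    {X : Set E} (hX : IsProperCSet X) (f : E →L[ℝ] F) (hf : Function.Surjective f) :
    IsProperCSet (f '' X) :=
  ⟨⟨hX.1.1.image f.continuous, hX.1.2.1.linear_image f.toLinearMap, ⟨0, hX.1.2.2, map_zero f⟩⟩,
    (f.isOpenMap hf).image_interior_subset X ⟨0, hX.2, map_zero f⟩⟩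

def mtrLinearMap (A : Matrix (Fin n) (Fin n) ℝ) (B : Matrix (Fin n) (Fin m) ℝ) :
    Rsp n →ₗ[ℝ] Rsp2 n m where
  toFun := Mtr A B
  map_add' p q := by simp only [Mtr, map_add]; rfl
  map_smul' c p := by simp only [Mtr, map_smul]; rfl

def pxprojCLM : Rsp2 n m →L[ℝ] Rsp n :=
  (ContinuousLinearMap.fst ℝ (Rsp n) (Rsp m)).comp
    (WithLp.prodContinuousLinearEquiv 2 ℝ (Rsp n) (Rsp m)).toContinuousLinearMap

theorem coe_pxprojCLM : ⇑(pxprojCLM : Rsp2 n m →L[ℝ] Rsp n) = Pxproj := rfl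

theorem pxprojCLM_surjective : Function.Surjective (pxprojCLM : Rsp2 n m →L[ℝ] Rsp n) :=
  fun x => ⟨WithLp.toLp 2 (x, 0), rfl⟩

/-- 𝒯⁺ = (𝒞* ⊕ Mᵀ𝒫*)* is a proper C-set in ℝ^{n+m} and
𝒫⁺ = P_x𝒯⁺ is a proper C-set in ℝⁿ. -/
theorem stmt_1 (n m : ℕ) (C : Set (Rsp2 n m)) (P : Set (Rsp n))
    (hC : IsProperCSet C) (hP : IsProperCSet P)
    (A : Matrix (Fin n) (Fin n) ℝ) (B : Matrix (Fin n) (Fin m) ℝ)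
    (Tplus : Set (Rsp2 n m)) (hT : Tplus = polarSet (polarSet C + Mtr A B '' polarSet P))
    (Pplus : Set (Rsp n)) (hPp : Pplus = Pxproj '' Tplus) :
    IsProperCSet Tplus ∧ IsProperCSet Pplus := by
  have hTplus : IsProperCSet Tplus := hT ▸ isProperCSet_polarSet_add_image (mtrLinearMap A B) hC hP
  refine ⟨hTplus, ?_⟩
  rw [hPp, ← coe_pxprojCLM]
  exact hTplus.image_of_surjective pxprojCLM pxprojCLM_surjective
end
end

section
/- Let 𝒞 ⊆ ℝ^{n+m} and 𝒫 ⊆ ℝⁿ be proper C-sets and let A ∈ ℝ^{n×n}, B ∈ ℝ^{n×m}. Define 𝒯⁺ = (𝒞* ⊕ Mᵀ𝒫*)* and 𝒫⁺ = P_x𝒯⁺. Then for every x ∈ ℝⁿ, the set of minimizers u⁺(x) = {u ∈ ℝᵐ : γ(𝒞,(x,u)) + γ(𝒫, Ax+Bu) = min_v [γ(𝒞,(x,v)) + γ(𝒫, Ax+Bv)]} equals {u ∈ ℝᵐ : (x,u) ∈ γ(𝒫⁺,x)·𝒯⁺}, where γ(𝒫⁺,x)·𝒯⁺ denotes the scalar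 multiple of 𝒯⁺ by γ(𝒫⁺,x). -/
open Pointwise Filter Topology Matrix

noncomputable section

variable {n m : ℕ}

/-!
By Hahn–Banach, the gauge of a closed convex neighbourhood of `0` is the support function of its
polar. Hence `𝒯⁺ = (𝒞* ⊕ Mᵀ𝒫*)*` is the unit sublevel set of the positively homogeneous, positive
definite cost `J(x,u) = γ(𝒞,(x,u)) + γ(𝒫, Ax+Bu)`, so `η𝒯⁺ = {J ≤ η}` for every `η ≥ 0`.
Projecting, `x ∈ η𝒫⁺` iff `J(x,u) ≤ η` for some `u`, so `γ(𝒫⁺,x) = inf_u J(x,u)`, and the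
minimizers are exactly the `u` with `J(x,u) ≤ γ(𝒫⁺,x)`, i.e. `(x,u) ∈ γ(𝒫⁺,x)𝒯⁺`.
-/

open InnerProductSpace

theorem mgauge_eq_gauge {E : Type*} [NormedAddCommGroup E] [NormedSpace ℝ E] {X : Set E}
    (h0 : (0 : E) ∈ X) : mgauge X = gauge X := by
  funext w
  rcases eq_or_ne w 0 with rfl | hw
  · rw [gauge_zero]
    exact le_antisymm (csInf_le ⟨0, fun _ h => h.1⟩ ⟨le_rfl, 0, h0, smul_zero 0⟩)
      (Real.sInf_nonneg fun _ h => h.1)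
  · refine congrArg sInf (Set.ext fun η => ⟨fun ⟨hη, hwη⟩ => ⟨hη.lt_of_ne ?_, hwη⟩,
      fun ⟨hη, hwη⟩ => ⟨hη.le, hwη⟩⟩)
    rintro rfl
    exact hw (Set.zero_smul_set_subset X hwη)

section Polar

variable {E F : Type*} [NormedAddCommGroup E] [InnerProductSpace ℝ E]
  [NormedAddCommGroup F] [InnerProductSpace ℝ F]

theorem inner_le_gauge_of_mem_polarSet {X : Set E} (hX : Absorbent ℝ X) {y : E}
    (hy : y ∈ polarSet X) (w : E) : ⟪y, w⟫_ℝ ≤ gauge X w := by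
  refine le_of_forall_gt fun a ha => ?_
  obtain ⟨b, hb, hba, x, hx, rfl⟩ := exists_lt_of_gauge_lt hX ha
  rw [real_inner_smul_right]
  exact (mul_le_of_le_one_right hb.le (hy x hx)).trans_lt hba

theorem exists_mem_polarSet_lt_inner [CompleteSpace E] {X : Set E} (hconv : Convex ℝ X)
    (hclosed : IsClosed X) (h0 : (0 : E) ∈ X) {g : ℝ} {w : E} (hg : g < gauge X w) :
    ∃ y ∈ polarSet X, g < ⟪y, w⟫_ℝ := by
  rcases lt_or_ge g 0 with hg0 | hg0
  · exact ⟨0, fun _ _ => by simp, by simpa using hg0⟩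
  obtain ⟨r, hgr, hr⟩ := exists_between hg
  have hr0 : 0 < r := hg0.trans_lt hgr
  have hw : w ∉ r • X := fun h => (gauge_le_of_mem hr0.le h).not_gt hr
  obtain ⟨φ, s, hφX, hφw⟩ :=
    geometric_hahn_banach_closed_point (hconv.smul r) (hclosed.smul_of_ne_zero hr0.ne') hw
  have hs : 0 < s := by simpa using hφX 0 (Set.zero_mem_smul_set h0)
  -- `φ < s` on `rX` while `s < φ w`, so `(r/s)φ` is at most `1` on `X` and exceeds `r` at `w`.
  refine ⟨(r / s) • (toDual ℝ E).symm φ, fun x hx => ?_, ?_⟩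
  · rw [real_inner_smul_left, toDual_symm_apply, div_mul_eq_mul_div, div_le_one hs,
      ← smul_eq_mul, ← map_smul]
    exact (hφX _ (Set.smul_mem_smul_set hx)).le
  · rw [real_inner_smul_left, toDual_symm_apply]
    calc g < r / s * s := by rwa [div_mul_cancel₀ r hs.ne']
      _ < r / s * φ w := mul_lt_mul_of_pos_left hφw (div_pos hr0 hs)

theorem polarSet_add_image_polarSet [CompleteSpace E] [CompleteSpace F] {X : Set E} {Y : Set F}
    (hXc : Convex ℝ X) (hX : IsClosed X) (hX0 : X ∈ 𝓝 0)
    (hYc : Convex ℝ Y) (hY : IsClosed Y) (hY0 : Y ∈ 𝓝 0)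
    {L : E → F} {L' : F → E} (hL : ∀ q w, ⟪L' q, w⟫_ℝ = ⟪q, L w⟫_ℝ) :
    polarSet (polarSet X + L' '' polarSet Y) = {w | gauge X w + gauge Y (L w) ≤ 1} := by
  ext w
  constructor
  · intro hw
    by_contra! hlt
    rw [Set.mem_ofPred_eq, not_le] at hlt
    set δ := (gauge X w + gauge Y (L w) - 1) / 2 with hδ_def
    have hδ : 0 < δ := by linarith
    obtain ⟨y, hy, hyw⟩ := exists_mem_polarSet_lt_inner hXc hX (mem_of_mem_nhds hX0)
      (sub_lt_self _ hδ)
    obtain ⟨q, hq, hqw⟩ := exists_mem_polarSet_lt_inner hYc hY (mem_of_mem_nhds hY0)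
      (sub_lt_self _ hδ)
    have := hw _ (Set.add_mem_add hy ⟨q, hq, rfl⟩)
    rw [inner_add_right, real_inner_comm y, real_inner_comm (L' q), hL] at this
    linarith
  · rintro hw _ ⟨y, hy, _, ⟨q, hq, rfl⟩, rfl⟩
    change ⟪w, y + L' q⟫_ℝ ≤ 1
    rw [Set.mem_ofPred_eq] at hw
    rw [inner_add_right, real_inner_comm y, real_inner_comm (L' q), hL]
    linarith [inner_le_gauge_of_mem_polarSet (absorbent_nhds_zero hX0) hy w,
      inner_le_gauge_of_mem_polarSet (absorbent_nhds_zero hY0) hq (L w)]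

end Polar

theorem smul_setOf_le_one {E : Type*} [AddCommGroup E] [Module ℝ E] {f : E → ℝ}
    (hf : ∀ c : ℝ, 0 ≤ c → ∀ w, f (c • w) = c * f w) (hf_pos : ∀ w, f w ≤ 0 → w = 0)
    {η : ℝ} (hη : 0 ≤ η) : η • {w | f w ≤ 1} = {w | f w ≤ η} := by
  have hf0 : f 0 = 0 := by simpa using hf 0 le_rfl 0
  rcases hη.eq_or_lt with rfl | hη
  · rw [Set.zero_smul_set ⟨0, by simp [hf0]⟩]
    ext w
    exact ⟨fun h => (Set.mem_zero.1 h) ▸ hf0.le, hf_pos w⟩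
  · ext w
    rw [Set.mem_smul_set_iff_inv_smul_mem₀ hη.ne', Set.mem_ofPred_eq, Set.mem_ofPred_eq,
      hf _ (inv_nonneg.2 hη.le), inv_mul_le_iff₀ hη, mul_one]

section GaugeCost

variable {E F : Type*} [NormedAddCommGroup E] [NormedSpace ℝ E]
  [NormedAddCommGroup F] [NormedSpace ℝ F] {X : Set E} {Y : Set F}

theorem gauge_add_gauge_comp_smul (L : E →ₗ[ℝ] F) {c : ℝ} (hc : 0 ≤ c) (w : E) :
    gauge X (c • w) + gauge Y (L (c • w)) = c * (gauge X w + gauge Y (L w)) := by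
  rw [map_smul, gauge_smul_of_nonneg hc, gauge_smul_of_nonneg hc, smul_eq_mul, smul_eq_mul,
    mul_add]

theorem eq_zero_of_gauge_add_gauge_comp_nonpos (hX0 : X ∈ 𝓝 0) (hXb : Bornology.IsBounded X)
    (L : E → F) {w : E} (hw : gauge X w + gauge Y (L w) ≤ 0) : w = 0 := by
  refine (gauge_eq_zero (absorbent_nhds_zero hX0) ((NormedSpace.isVonNBounded_iff ℝ).2 hXb)).1 ?_
  linarith [gauge_nonneg (s := X) w, gauge_nonneg (s := Y) (L w)]

end GaugeCost

theorem sInf_setOf_exists_le_eq_iInf {ι : Type*} [Nonempty ι] {g : ι → ℝ} (hg : ∀ i, 0 ≤ g i) :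
    sInf {η | 0 ≤ η ∧ ∃ i, g i ≤ η} = ⨅ i, g i := by
  refine le_antisymm (le_ciInf fun i => csInf_le ⟨0, fun _ h => h.1⟩ ⟨hg i, i, le_rfl⟩) ?_
  obtain ⟨i⟩ := ‹Nonempty ι›
  exact le_csInf ⟨g i, hg i, i, le_rfl⟩ fun η ⟨_, j, hj⟩ =>
    (ciInf_le ⟨0, Set.forall_mem_range.2 hg⟩ j).trans hj

section Control

variable {n m : ℕ}

def mfwdₗ (A : Matrix (Fin n) (Fin n) ℝ) (B : Matrix (Fin n) (Fin m) ℝ) :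
    Rsp2 n m →ₗ[ℝ] Rsp n :=
  (toEuclideanLin A).comp (WithLp.fstₗ 2 ℝ _ _) + (toEuclideanLin B).comp (WithLp.sndₗ 2 ℝ _ _)

theorem coe_mfwdₗ (A : Matrix (Fin n) (Fin n) ℝ) (B : Matrix (Fin n) (Fin m) ℝ) :
    ⇑(mfwdₗ A B) = Mfwd A B :=
  rfl

theorem inner_Mtr (A : Matrix (Fin n) (Fin n) ℝ) (B : Matrix (Fin n) (Fin m) ℝ)
    (q : Rsp n) (w : Rsp2 n m) : ⟪Mtr A B q, w⟫_ℝ = ⟪q, Mfwd A B w⟫_ℝ := by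
  rw [WithLp.prod_inner_apply, Mtr, ← conjTranspose_eq_transpose_of_trivial,
    ← conjTranspose_eq_transpose_of_trivial, Matrix.toEuclideanLin_conjTranspose_eq_adjoint,
    Matrix.toEuclideanLin_conjTranspose_eq_adjoint, LinearMap.adjoint_inner_left,
    LinearMap.adjoint_inner_left, Mfwd, inner_add_right]

theorem mem_smul_image_Pxproj_iff {S : Set (Rsp2 n m)} (η : ℝ) (x : Rsp n) :
    x ∈ η • (Pxproj '' S) ↔ ∃ u : Rsp m, (WithLp.toLp 2 (x, u) : Rsp2 n m) ∈ η • S := by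
  rw [show (Pxproj : Rsp2 n m → Rsp n) = WithLp.fstₗ 2 ℝ _ _ from rfl,
    ← image_smul_set]
  exact ⟨fun ⟨w, hw, hwx⟩ => ⟨w.ofLp.2, hwx ▸ hw⟩, fun ⟨u, hu⟩ => ⟨_, hu, rfl⟩⟩

theorem mgauge_image_Pxproj {f : Rsp2 n m → ℝ} (hf0 : ∀ w, 0 ≤ f w)
    (hsmul : ∀ η : ℝ, 0 ≤ η → η • {w | f w ≤ 1} = {w | f w ≤ η}) (x : Rsp n) :
    mgauge (Pxproj '' {w | f w ≤ 1}) x = ⨅ u : Rsp m, f (WithLp.toLp 2 (x, u)) := by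
  rw [← sInf_setOf_exists_le_eq_iInf fun u => hf0 _]
  refine congrArg sInf (Set.ext fun η => and_congr_right fun hη => ?_)
  rw [mem_smul_image_Pxproj_iff, hsmul η hη]
  rfl

end Control

/-- the set of minimizers u⁺(x) equals {u : (x,u) ∈ γ(𝒫⁺,x)·𝒯⁺}. -/
theorem stmt_3 (n m : ℕ) (C : Set (Rsp2 n m)) (P : Set (Rsp n))
    (hC : IsProperCSet C) (hP : IsProperCSet P)
    (A : Matrix (Fin n) (Fin n) ℝ) (B : Matrix (Fin n) (Fin m) ℝ)
    (Tplus : Set (Rsp2 n m)) (hT : Tplus = polarSet (polarSet C + Mtr A B '' polarSet P))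
    (Pplus : Set (Rsp n)) (hPp : Pplus = Pxproj '' Tplus) :
    ∀ x : Rsp n,
      {u : Rsp m |
          mgauge C (WithLp.toLp 2 (x, u) : Rsp2 n m) + mgauge P (Mfwd A B (WithLp.toLp 2 (x, u))) =
            ⨅ v : Rsp m, (mgauge C (WithLp.toLp 2 (x, v) : Rsp2 n m) + mgauge P (Mfwd A B (WithLp.toLp 2 (x, v))))} =
        {u : Rsp m | (WithLp.toLp 2 (x, u) : Rsp2 n m) ∈ mgauge Pplus x • Tplus} := by
  subst hT hPp
  intro x
  obtain ⟨⟨hCcpt, hCconv, hC0⟩, hCint⟩ := hC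
  obtain ⟨⟨hPcpt, hPconv, hP0⟩, hPint⟩ := hP
  rw [mem_interior_iff_mem_nhds] at hCint hPint
  set J : Rsp2 n m → ℝ := fun w => gauge C w + gauge P (mfwdₗ A B w)
  have hJ0 : ∀ w, 0 ≤ J w := fun w => add_nonneg (gauge_nonneg _) (gauge_nonneg _)
  have hTplus : polarSet (polarSet C + Mtr A B '' polarSet P) = {w | J w ≤ 1} :=
    polarSet_add_image_polarSet hCconv hCcpt.isClosed hCint hPconv hPcpt.isClosed hPint
      (inner_Mtr A B)
  have hsmul : ∀ η : ℝ, 0 ≤ η → η • {w | J w ≤ 1} = {w | J w ≤ η} := fun η =>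
    smul_setOf_le_one (fun c hc => gauge_add_gauge_comp_smul _ hc)
      (fun w => eq_zero_of_gauge_add_gauge_comp_nonpos hCint hCcpt.isBounded _)
  rw [mgauge_eq_gauge hC0, mgauge_eq_gauge hP0, ← coe_mfwdₗ, hTplus,
    mgauge_image_Pxproj hJ0 hsmul, hsmul _ (le_ciInf fun _ => hJ0 _)]
  ext u
  exact ⟨le_of_eq, fun h => h.antisymm (ciInf_le ⟨0, Set.forall_mem_range.2 fun _ => hJ0 _⟩ u)⟩
end
end

section
/- Let 𝒞 ⊆ ℝ^{n+m} and 𝒫 ⊆ ℝⁿ be proper C-sets and let A ∈ ℝ^{n×n}, B ∈ ℝ^{n×m}. For x ∈ ℝⁿ let u⁺(x) ⊆ ℝᵐ be the set of minimizers of u ↦ γ(𝒞,(x,u)) + γ(𝒫, Ax+Bu). Then: (a) for every x ∈ ℝⁿ, u⁺(x) is nonempty, compact and convex; (b) u⁺ is positively homogeneous of the first degree, i.e. u⁺(ηx) = η·u⁺(x) for all η ≥ 0 and all x ∈ ℝⁿ; and (c) u⁺ is outer semicontinuous: for every x ∈ ℝⁿ, every sequence x_k → x and every convergent sequence u_k →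 u with u_k ∈ u⁺(x_k) for all k, one has u ∈ u⁺(x). -/
open Pointwise Filter Topology Matrix

noncomputable section

variable {n m : ℕ}

/-
Write g(x,u) = γ(𝒞,(x,u)) + γ(𝒫,Ax+Bu). Both gauges are continuous, convex and positively
homogeneous, and since 𝒞 is bounded, ‖u‖ ≤ R·g(x,u). So each slice g(x,·) is a continuous convex coercive
function, whose set of minimizers is nonempty, compact and convex; homogeneity of g rescales minimizers
(for η = 0 the only minimizer of g(0,·) is 0), and joint continuity of g makes the graph of u⁺ closed.
-/

section Gauge

variable {E : Type*} [NormedAddCommGroup E] [NormedSpace ℝ E] {s : Set E}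

theorem mgauge_eq_gauge_s4 (h0 : (0 : E) ∈ s) : mgauge s = gauge s := by
  funext y
  -- `mgauge` admits the scale η = 0, where `gauge` demands η > 0; since `0 • s = {0}`, this only
  -- matters at `y = 0`.
  rcases eq_or_ne y 0 with rfl | hy
  · rw [gauge_zero]
    refine le_antisymm (csInf_le ⟨0, fun η hη => hη.1⟩ ⟨le_rfl, ?_⟩)
      (le_csInf ⟨1, zero_le_one, by rwa [one_smul]⟩ fun η hη => hη.1)
    exact ⟨0, h0, smul_zero 0⟩
  · unfold mgauge gauge
    congr 1
    ext η
    refine ⟨fun ⟨hη, hmem⟩ => ⟨hη.lt_of_ne ?_, hmem⟩, fun ⟨hη, hmem⟩ => ⟨hη.le, hmem⟩⟩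
    rintro rfl
    rw [Set.zero_smul_set ⟨0, h0⟩] at hmem
    exact hy hmem

theorem convexOn_gauge (hs : Convex ℝ s) (hs₀ : Absorbent ℝ s) : ConvexOn ℝ Set.univ (gauge s) :=
  ⟨convex_univ, fun x _ y _ a b ha hb _ => by
    simpa only [gauge_smul_of_nonneg ha, gauge_smul_of_nonneg hb, smul_eq_mul]
      using gauge_add_le hs hs₀ (a • x) (b • y)⟩

theorem norm_le_mul_gauge {r : ℝ} (hs : Absorbent ℝ s) (hr : 0 < r)
    (hsr : s ⊆ Metric.closedBall 0 r) (x : E) : ‖x‖ ≤ r * gauge s x := by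
  rw [← div_le_iff₀' hr]
  exact le_gauge_of_subset_closedBall hs hr.le hsr

end Gauge

section ConvexOnProd

variable {E F : Type*} [AddCommGroup E] [Module ℝ E] [AddCommGroup F] [Module ℝ F]

theorem ConvexOn.slice {g : E × F → ℝ} (hg : ConvexOn ℝ Set.univ g) (x : E) :
    ConvexOn ℝ Set.univ fun v => g (x, v) :=
  ⟨convex_univ, fun u _ v _ a b ha hb hab => by
    simpa [← add_smul, hab] using hg.2 (Set.mem_univ (x, u)) (Set.mem_univ (x, v)) ha hb hab⟩

theorem ConvexOn.comp_toLp {f : WithLp 2 (E × F) → ℝ} (hf : ConvexOn ℝ Set.univ f) :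
    ConvexOn ℝ Set.univ fun p : E × F => f (WithLp.toLp 2 p) :=
  hf.comp_linearMap (WithLp.linearEquiv 2 ℝ (E × F)).symm.toLinearMap

end ConvexOnProd

def minimizers {U : Type*} (φ : U → ℝ) : Set U := {u | ∀ v, φ u ≤ φ v}

section Minimizers

variable {U : Type*} {φ : U → ℝ}

theorem minimizers_eq_iInter : minimizers φ = ⋂ v, {u | φ u ≤ φ v} := by
  ext u
  simp [minimizers]

theorem isClosed_minimizers [TopologicalSpace U] (hφ : Continuous φ) : IsClosed (minimizers φ) :=
  minimizers_eq_iInter (φ := φ) ▸ isClosed_iInter fun _ => isClosed_le hφ continuous_const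

theorem convex_minimizers [AddCommGroup U] [Module ℝ U] (hφ : ConvexOn ℝ Set.univ φ) :
    Convex ℝ (minimizers φ) :=
  minimizers_eq_iInter (φ := φ) ▸ convex_iInter fun v => by simpa using hφ.convex_le (φ v)

theorem minimizers_const_mul {c : ℝ} (hc : 0 < c) :
    minimizers (fun u => c * φ u) = minimizers φ := by
  ext u
  show (∀ v, c * φ u ≤ c * φ v) ↔ ∀ v, φ u ≤ φ v
  simp only [mul_le_mul_iff_right₀ hc]

theorem minimizers_comp_smul [AddCommGroup U] [Module ℝ U] {a : ℝ} (ha : a ≠ 0) :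
    minimizers (fun u => φ (a • u)) = a⁻¹ • minimizers φ := by
  rw [← Set.preimage_smul₀ ha]
  ext u
  exact ⟨fun h v => by simpa [smul_inv_smul₀ ha] using h (a⁻¹ • v), fun h v => h (a • v)⟩

variable [NormedAddCommGroup U] {R : ℝ}

theorem minimizers_subset_closedBall (hR : 0 ≤ R) (hcoer : ∀ u, ‖u‖ ≤ R * φ u) :
    minimizers φ ⊆ Metric.closedBall 0 (R * φ 0) := fun u hu => by
  rw [mem_closedBall_zero_iff]
  exact (hcoer u).trans (mul_le_mul_of_nonneg_left (hu 0) hR)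

variable [ProperSpace U]

theorem minimizers_nonempty (hφ : Continuous φ) (hR : 0 ≤ R) (hcoer : ∀ u, ‖u‖ ≤ R * φ u) :
    (minimizers φ).Nonempty := by
  refine hφ.exists_forall_le' 0 ?_
  filter_upwards [(isCompact_closedBall (0 : U) (R * φ 0)).compl_mem_cocompact] with u hu
  rw [Set.mem_compl_iff, mem_closedBall_zero_iff, not_le] at hu
  exact (lt_of_mul_lt_mul_left (hu.trans_le (hcoer u)) hR).le

theorem isCompact_minimizers (hφ : Continuous φ) (hR : 0 ≤ R) (hcoer : ∀ u, ‖u‖ ≤ R * φ u) :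
    IsCompact (minimizers φ) :=
  (isCompact_closedBall _ _).of_isClosed_subset (isClosed_minimizers hφ)
    (minimizers_subset_closedBall hR hcoer)

end Minimizers

section Slices

theorem mem_minimizers_of_tendsto {X U ι : Type*} [TopologicalSpace X] [TopologicalSpace U]
    {g : X × U → ℝ} (hg : Continuous g) {l : Filter ι} [l.NeBot] {xs : ι → X} {us : ι → U}
    {x : X} {u : U} (hxs : Tendsto xs l (𝓝 x)) (hus : Tendsto us l (𝓝 u))
    (hmem : ∀ k, us k ∈ minimizers fun v => g (xs k, v)) :
    u ∈ minimizers fun v => g (x, v) := fun v =>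
  le_of_tendsto_of_tendsto' ((hg.tendsto _).comp (hxs.prodMk_nhds hus))
    ((hg.tendsto _).comp (hxs.prodMk_nhds tendsto_const_nhds)) fun k => hmem k v

variable {E F : Type*} [AddCommGroup E] [Module ℝ E] [NormedAddCommGroup F] [NormedSpace ℝ F]
  {g : E × F → ℝ}

theorem minimizers_zero_slice (hhom : ∀ η : ℝ, 0 ≤ η → ∀ p, g (η • p) = η * g p) {R : ℝ}
    (hR : 0 < R) (hcoer : ∀ p : E × F, ‖p.2‖ ≤ R * g p) :
    (minimizers fun v => g (0, v)) = {0} := by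
  have hg0 : g (0, 0) = 0 := by
    have := hhom 0 le_rfl 0
    rwa [zero_smul, zero_mul] at this
  ext u
  refine ⟨fun hu => norm_le_zero_iff.mp ?_, fun hu v => ?_⟩
  · simpa [hg0] using (hcoer (0, u)).trans (mul_le_mul_of_nonneg_left (hu 0) hR.le)
  · rw [Set.mem_singleton_iff.mp hu]
    exact hg0.trans_le (nonneg_of_mul_nonneg_right ((norm_nonneg v).trans (hcoer (0, v))) hR)

theorem minimizers_smul_slice (hhom : ∀ η : ℝ, 0 ≤ η → ∀ p, g (η • p) = η * g p) {R : ℝ}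
    (hR : 0 < R) (hcoer : ∀ p : E × F, ‖p.2‖ ≤ R * g p) {x : E}
    (hne : (minimizers fun v => g (x, v)).Nonempty) {η : ℝ} (hη : 0 ≤ η) :
    (minimizers fun v => g (η • x, v)) = η • minimizers fun v => g (x, v) := by
  rcases hη.eq_or_lt with rfl | hη
  · rw [zero_smul, minimizers_zero_slice hhom hR hcoer, Set.zero_smul_set hne, Set.singleton_zero]
  · have hrescale : (fun v => g (η • x, v)) = fun v => η * g (x, η⁻¹ • v) := by
      funext v
      rw [← hhom η hη.le, Prod.smul_mk, smul_inv_smul₀ hη.ne']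
    rw [hrescale, minimizers_const_mul hη,
      minimizers_comp_smul (φ := fun v => g (x, v)) (inv_ne_zero hη.ne'), inv_inv]

end Slices

section GaugeCost

variable {W V : Type*} [NormedAddCommGroup W] [NormedSpace ℝ W] [NormedAddCommGroup V]
  [NormedSpace ℝ V] {C : Set W} {P : Set V} {L : W →L[ℝ] V}

def gaugeCost (C : Set W) (P : Set V) (L : W →L[ℝ] V) (w : W) : ℝ := gauge C w + gauge P (L w)

theorem continuous_gaugeCost (hC : Convex ℝ C) (hC₀ : C ∈ 𝓝 0) (hP : Convex ℝ P)
    (hP₀ : P ∈ 𝓝 0) : Continuous (gaugeCost C P L) :=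
  (continuous_gauge hC hC₀).add ((continuous_gauge hP hP₀).comp L.continuous)

theorem convexOn_gaugeCost (hC : Convex ℝ C) (hC₀ : C ∈ 𝓝 0) (hP : Convex ℝ P)
    (hP₀ : P ∈ 𝓝 0) : ConvexOn ℝ Set.univ (gaugeCost C P L) :=
  (convexOn_gauge hC (absorbent_nhds_zero hC₀)).add
    ((convexOn_gauge hP (absorbent_nhds_zero hP₀)).comp_linearMap L.toLinearMap)

theorem gaugeCost_smul {η : ℝ} (hη : 0 ≤ η) (w : W) :
    gaugeCost C P L (η • w) = η * gaugeCost C P L w := by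
  simp only [gaugeCost, map_smul, gauge_smul_of_nonneg hη, smul_eq_mul, mul_add]

theorem norm_le_mul_gaugeCost {R : ℝ} (hC₀ : C ∈ 𝓝 0) (hR : 0 < R)
    (hCR : C ⊆ Metric.closedBall 0 R) (w : W) : ‖w‖ ≤ R * gaugeCost C P L w :=
  (norm_le_mul_gauge (absorbent_nhds_zero hC₀) hR hCR w).trans
    (mul_le_mul_of_nonneg_left (le_add_of_nonneg_right (gauge_nonneg _)) hR.le)

end GaugeCost

def mfwdCLM (A : Matrix (Fin n) (Fin n) ℝ) (B : Matrix (Fin n) (Fin m) ℝ) :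
    Rsp2 n m →L[ℝ] Rsp n :=
  (LinearMap.toContinuousLinearMap (toEuclideanLin A) ∘L ContinuousLinearMap.fst ℝ _ _ +
    LinearMap.toContinuousLinearMap (toEuclideanLin B) ∘L ContinuousLinearMap.snd ℝ _ _) ∘L
    (WithLp.prodContinuousLinearEquiv 2 ℝ (Rsp n) (Rsp m)).toContinuousLinearMap

/-- the minimizer map u⁺ is nonempty-, compact-, convex-valued,
positively homogeneous of the first degree, and outer semicontinuous. -/
theorem stmt_4 (n m : ℕ) (C : Set (Rsp2 n m)) (P : Set (Rsp n))
    (hC : IsProperCSet C) (hP : IsProperCSet P)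
    (A : Matrix (Fin n) (Fin n) ℝ) (B : Matrix (Fin n) (Fin m) ℝ)
    (uPlus : Rsp n → Set (Rsp m))
    (huP : ∀ x : Rsp n, uPlus x =
      {u : Rsp m | ∀ v : Rsp m,
        mgauge C (WithLp.toLp 2 (x, u) : Rsp2 n m) + mgauge P (Mfwd A B (WithLp.toLp 2 (x, u))) ≤
          mgauge C (WithLp.toLp 2 (x, v) : Rsp2 n m) + mgauge P (Mfwd A B (WithLp.toLp 2 (x, v)))}) :
    (∀ x : Rsp n, (uPlus x).Nonempty ∧ IsCompact (uPlus x) ∧ Convex ℝ (uPlus x)) ∧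
    (∀ η : ℝ, 0 ≤ η → ∀ x : Rsp n, uPlus (η • x) = η • uPlus x) ∧
    (∀ (x : Rsp n) (u : Rsp m) (xs : ℕ → Rsp n) (us : ℕ → Rsp m),
      Tendsto xs atTop (nhds x) → Tendsto us atTop (nhds u) →
      (∀ k : ℕ, us k ∈ uPlus (xs k)) → u ∈ uPlus x) := by
  obtain ⟨⟨hC_compact, hC_convex, hC_zero⟩, hC_int⟩ := hC
  obtain ⟨⟨-, hP_convex, hP_zero⟩, hP_int⟩ := hP
  have hC_nhds := mem_interior_iff_mem_nhds.mp hC_int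
  have hP_nhds := mem_interior_iff_mem_nhds.mp hP_int
  obtain ⟨R, hR, hCR⟩ := hC_compact.isBounded.subset_closedBall_lt 0 0
  let g : Rsp n × Rsp m → ℝ := fun p => gaugeCost C P (mfwdCLM A B) (WithLp.toLp 2 p)
  have huP' : ∀ x, uPlus x = minimizers fun u => g (x, u) := by
    intro x
    rw [huP x, mgauge_eq_gauge_s4 hC_zero, mgauge_eq_gauge_s4 hP_zero]
    rfl
  have hg_cont : Continuous g :=
    (continuous_gaugeCost hC_convex hC_nhds hP_convex hP_nhds).comp
      (WithLp.prod_continuous_toLp 2 _ _)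
  have hg_conv : ConvexOn ℝ Set.univ g :=
    (convexOn_gaugeCost hC_convex hC_nhds hP_convex hP_nhds).comp_toLp
  have hg_hom : ∀ η : ℝ, 0 ≤ η → ∀ p, g (η • p) = η * g p := fun η hη p => by
    simp only [g, WithLp.toLp_smul, gaugeCost_smul hη]
  have hg_coer : ∀ p, ‖p.2‖ ≤ R * g p := fun p =>
    (WithLp.norm_snd_le (x := WithLp.toLp 2 p)).trans
      (norm_le_mul_gaugeCost hC_nhds hR hCR _)
  have hg_slice : ∀ x, Continuous fun u => g (x, u) := fun x => hg_cont.comp (.prodMk_right x)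
  have hne : ∀ x, (minimizers fun u => g (x, u)).Nonempty := fun x =>
    minimizers_nonempty (hg_slice x) hR.le fun u => hg_coer (x, u)
  simp only [huP']
  exact ⟨fun x => ⟨hne x, isCompact_minimizers (hg_slice x) hR.le fun u => hg_coer (x, u),
      convex_minimizers (hg_conv.slice x)⟩,
    fun η hη x => minimizers_smul_slice hg_hom hR hg_coer (hne x) hη,
    fun x u xs us hxs hus hmem => mem_minimizers_of_tendsto hg_cont hxs hus hmem⟩
end
end

section
/- Let 𝒞 ⊆ ℝ^{n+m} be a proper C-set, let A ∈ ℝ^{n×n}, B ∈ ℝ^{n×m}, and let S ⊆ ℝⁿ be a C-set. Define the sequences 𝒯₁ = (𝒞* ⊕ MᵀS)*, 𝒫₁ = P_x𝒯₁, and for k ≥ 1, 𝒯_{k+1} = (𝒞* ⊕ Mᵀ𝒫_k*)*, 𝒫_{k+1} = P_x𝒯_{k+1}. If 𝒫₁* ⊆ S, then for every k ≥ 1, 𝒫_k ⊆ 𝒫_{k+1}. -/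
open Pointwise Filter Topology Matrix

noncomputable section

variable {n m : ℕ}

section Polar

variable {E : Type*} [NormedAddCommGroup E] [InnerProductSpace ℝ E]

lemma polarSet_antitone : Antitone (polarSet : Set E → Set E) :=
  fun _ _ hXY _ hy x hx => hy x (hXY hx)

/-- The recursion `𝒫_{k+1} = P_x (𝒞* ⊕ Mᵀ 𝒫_k*)*` is this map applied to `𝒫_k*`. -/
lemma image_polarSet_add_image_antitone {F G : Type*} (K : Set E) (f : F → E) (g : E → G) :
    Antitone fun T : Set F => g '' polarSet (K + f '' T) :=
  fun _ _ hST => Set.image_mono <| polarSet_antitone <|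
    Set.add_subset_add subset_rfl (Set.image_mono hST)

end Polar

theorem stmt_11_general (n m : ℕ) (C : Set (Rsp2 n m))
    (A : Matrix (Fin n) (Fin n) ℝ) (B : Matrix (Fin n) (Fin m) ℝ)
    (S : Set (Rsp n))
    (P : ℕ → Set (Rsp n))
    (hP0 : P 0 = Pxproj '' polarSet (polarSet C + Mtr A B '' S))
    (hPs : ∀ k : ℕ, P (k + 1) = Pxproj '' polarSet (polarSet C + Mtr A B '' polarSet (P k)))
    (hmono : polarSet (P 0) ⊆ S) :
    ∀ k : ℕ, P k ⊆ P (k + 1) := by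
  have hstep := image_polarSet_add_image_antitone (polarSet C) (Mtr A B) Pxproj
  intro k
  induction k with
  | zero => exact hP0.trans_subset ((hstep hmono).trans_eq (hPs 0).symm)
  | succ k ih =>
    rw [hPs k, hPs (k + 1)]
    exact hstep (polarSet_antitone ih)

/-- if 𝒫₁* ⊆ S, the iterates are monotonically nondecreasing. -/
theorem stmt_11 (n m : ℕ) (C : Set (Rsp2 n m)) (hC : IsProperCSet C)
    (A : Matrix (Fin n) (Fin n) ℝ) (B : Matrix (Fin n) (Fin m) ℝ)
    (S : Set (Rsp n)) (hS : IsCSet S)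
    (P : ℕ → Set (Rsp n))
    (hP0 : P 0 = Pxproj '' polarSet (polarSet C + Mtr A B '' S))
    (hPs : ∀ k : ℕ, P (k + 1) = Pxproj '' polarSet (polarSet C + Mtr A B '' polarSet (P k)))
    (hmono : polarSet (P 0) ⊆ S) :
    ∀ k : ℕ, P k ⊆ P (k + 1) :=
  stmt_11_general n m C A B S P hP0 hPs hmono
end
end
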